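/- arXiv:2401.07831 — 3 statements merged into one kernel-verified Lean document; each statement's English description precedes it below -/
import Mathlib

section
/- Let Δ > 0, r > 0, s ≥ 0 and β, γ be real numbers with 0 < β, 2β ≤ γ and β + γ + π/2 < π. Assume the hyperbolic law-of-sines relation sinh(r)·sin(γ) = sinh(Δ)·sin(β) and the hyperbolic Pythagorean relation cosh(s) = cosh(r)·cosh(Δ). Then s < arcosh(√(1 + (1/3)·sinh(Δ)²)·cosh(Δ)). -/
/-- Inverse hyperbolic cosine: for `x ≥ 1`, `arcosh x` is the unique `y ≥ 0`
with `Real.cosh y = x`; defined by the standard formula `log (x + √(x² - 1))`. -/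
noncomputable def Real.arcosh' (x : ℝ) : ℝ := Real.log (x + Real.sqrt (x ^ 2 - 1))

/-!
The law of sines and `γ ≥ 2β` give `sinh Δ · sin β ≥ sinh r · sin 2β = 2 cos β · sinh r · sin β`,
and the angle sum forces `β < π/6`, so `sinh Δ > √3 · sinh r`. Hence
`cosh² r = 1 + sinh² r < 1 + sinh² Δ / 3`, and the Pythagorean relation
`cosh s = cosh r · cosh Δ` bounds `cosh s`.
-/

open Real

theorem Real.arcosh'_eq_arcosh : arcosh' = arcosh := rfl

theorem Real.lt_arcosh_of_cosh_lt {s x : ℝ} (h : cosh s < x) : s < arcosh x := calc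
  s ≤ |s| := le_abs_self s
  _ = arcosh (cosh s) := by rw [← cosh_abs, arcosh_cosh (abs_nonneg s)]
  _ < arcosh x := (arcosh_lt_arcosh (cosh_pos s) ((cosh_pos s).trans h)).2 h

theorem Real.sqrt_three_div_two_lt_cos {β : ℝ} (h₀ : -(π / 6) < β) (h₁ : β < π / 6) :
    √3 / 2 < cos β := by
  rw [← cos_pi_div_six, ← cos_abs β]
  exact cos_lt_cos_of_nonneg_of_le_pi_div_two (abs_nonneg β) (by linarith [pi_pos])
    (abs_lt.2 ⟨h₀, h₁⟩)

theorem Real.two_mul_cos_mul_le_of_mul_sin_eq {a b β γ : ℝ} (ha : 0 ≤ a) (hβ : 0 < β)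
    (hβγ : 2 * β ≤ γ) (hγ : γ ≤ π / 2) (h : a * sin γ = b * sin β) :
    2 * cos β * a ≤ b := by
  have hsinβ : 0 < sin β := sin_pos_of_pos_of_lt_pi hβ (by linarith [pi_pos])
  have hsin : sin (2 * β) ≤ sin γ :=
    strictMonoOn_sin.monotoneOn ⟨by linarith [pi_pos], by linarith⟩
      ⟨by linarith [pi_pos], hγ⟩ hβγ
  have : 2 * cos β * a * sin β ≤ b * sin β := calc
    2 * cos β * a * sin β = a * sin (2 * β) := by rw [sin_two_mul]; ring
    _ ≤ a * sin γ := mul_le_mul_of_nonneg_left hsin ha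
    _ = b * sin β := h
  exact le_of_mul_le_mul_right this hsinβ

theorem Real.cosh_lt_sqrt_of_sqrt_three_mul_sinh_lt {r d : ℝ} (hr : 0 ≤ r)
    (h : √3 * sinh r < d) : cosh r < √(1 + (1 / 3) * d ^ 2) := by
  have h3 : √3 ^ 2 = 3 := sq_sqrt (by norm_num)
  have hsq : (√3 * sinh r) ^ 2 < d ^ 2 :=
    pow_lt_pow_left₀ h (mul_nonneg (sqrt_nonneg 3) (sinh_nonneg_iff.2 hr)) two_ne_zero
  rw [lt_sqrt (cosh_pos r).le, cosh_sq]
  nlinarith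

theorem stmt_0_general (Δ r s β γ : ℝ)
    (hr : 0 < r)
    (hβ : 0 < β) (hβγ : 2 * β ≤ γ) (hsum : β + γ + Real.pi / 2 < Real.pi)
    (hsin : Real.sinh r * Real.sin γ = Real.sinh Δ * Real.sin β)
    (hpyth : Real.cosh s = Real.cosh r * Real.cosh Δ) :
    s < Real.arcosh' (Real.sqrt (1 + (1 / 3) * Real.sinh Δ ^ 2) * Real.cosh Δ) := by
  have hcos : √3 / 2 < cos β := sqrt_three_div_two_lt_cos (by linarith) (by linarith)
  have hsinh : √3 * sinh r < sinh Δ := calc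
    √3 * sinh r = 2 * (√3 / 2) * sinh r := by ring
    _ < 2 * cos β * sinh r := by gcongr
    _ ≤ sinh Δ :=
      two_mul_cos_mul_le_of_mul_sin_eq (sinh_pos_iff.2 hr).le hβ hβγ (by linarith) hsin
  rw [arcosh'_eq_arcosh]
  apply lt_arcosh_of_cosh_lt
  rw [hpyth]
  gcongr
  exact cosh_lt_sqrt_of_sqrt_three_mul_sinh_lt hr.le hsinh

theorem stmt_0 (Δ r s β γ : ℝ)
    (hΔ : 0 < Δ) (hr : 0 < r) (hs : 0 ≤ s)
    (hβ : 0 < β) (hβγ : 2 * β ≤ γ) (hsum : β + γ + Real.pi / 2 < Real.pi)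
    (hsin : Real.sinh r * Real.sin γ = Real.sinh Δ * Real.sin β)
    (hpyth : Real.cosh s = Real.cosh r * Real.cosh Δ) :
    s < Real.arcosh' (Real.sqrt (1 + (1 / 3) * Real.sinh Δ ^ 2) * Real.cosh Δ) :=
  stmt_0_general Δ r s β γ hr hβ hβγ hsum hsin hpyth
end

section
/- Let Δ > 0, r > 0, s ≥ 0 and β, γ be real numbers with 0 < β, 2β ≤ γ and β + γ + π/2 < π. Assume sinh(r)·sin(γ) = sinh(Δ)·sin(β) and cosh(s) = cosh(r)·cosh(Δ). Then s < 2Δ. -/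
theorem stmt_7 (Δ r s β γ : ℝ)
    (hΔ : 0 < Δ) (hr : 0 < r) (hs : 0 ≤ s)
    (hβ : 0 < β) (hβγ : 2 * β ≤ γ) (hsum : β + γ + Real.pi / 2 < Real.pi)
    (hsin : Real.sinh r * Real.sin γ = Real.sinh Δ * Real.sin β)
    (hpyth : Real.cosh s = Real.cosh r * Real.cosh Δ) :
    s < 2 * Δ := by
  have hpi := Real.pi_pos
  -- β + γ < π/2
  have hbg : β + γ < Real.pi / 2 := by linarith
  have hβ6 : β < Real.pi / 6 := by linarith
  have hγpos : 0 < γ := by linarith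
  have hsinβ : 0 < Real.sin β := Real.sin_pos_of_pos_of_lt_pi hβ (by linarith)
  have hsinγ : 0 < Real.sin γ := Real.sin_pos_of_pos_of_lt_pi hγpos (by linarith)
  -- sin (2β) ≤ sin γ
  have hmono : Real.sin (2 * β) ≤ Real.sin γ := by
    apply Real.strictMonoOn_sin.monotoneOn
    · constructor <;> [linarith; linarith]
    · constructor <;> [linarith; linarith]
    · exact hβγ
  rw [Real.sin_two_mul] at hmono
  have hsinhr : 0 < Real.sinh r := Real.sinh_pos_iff.mpr hr
  have hsinhΔ : 0 < Real.sinh Δ := Real.sinh_pos_iff.mpr hΔ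
  -- 2 sinh r cos β ≤ sinh Δ
  have hkey : 2 * Real.sinh r * Real.cos β ≤ Real.sinh Δ := by
    have h1 : Real.sinh r * (2 * Real.sin β * Real.cos β) ≤ Real.sinh Δ * Real.sin β := by
      calc Real.sinh r * (2 * Real.sin β * Real.cos β) ≤ Real.sinh r * Real.sin γ := by
            exact mul_le_mul_of_nonneg_left hmono hsinhr.le
        _ = Real.sinh Δ * Real.sin β := hsin
    nlinarith [hsinβ]
  -- cos β > √3/2
  have hcos : Real.sqrt 3 / 2 < Real.cos β := by
    rw [← Real.cos_pi_div_six]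
    exact Real.cos_lt_cos_of_nonneg_of_le_pi hβ.le (by linarith) hβ6
  have hsqrt3 : (Real.sqrt 3) ^ 2 = 3 := Real.sq_sqrt (by norm_num)
  have hsqrt3pos : 0 < Real.sqrt 3 := Real.sqrt_pos.mpr (by norm_num)
  -- 3 sinh r ^ 2 < sinh Δ ^ 2
  have h3 : 3 * Real.sinh r ^ 2 < Real.sinh Δ ^ 2 := by
    have ha : Real.sqrt 3 * Real.sinh r < Real.sinh Δ := by nlinarith
    have hb : (Real.sqrt 3 * Real.sinh r) ^ 2 < Real.sinh Δ ^ 2 :=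
      pow_lt_pow_left₀ ha (by positivity) (by norm_num)
    nlinarith [hb]
  -- cosh s < cosh (2Δ)
  have hcΔ : 1 < Real.cosh Δ := Real.one_lt_cosh.mpr hΔ.ne'
  have hcosh_s : Real.cosh s < Real.cosh (2 * Δ) := by
    have hid : Real.cosh Δ ^ 2 = 1 + Real.sinh Δ ^ 2 := Real.cosh_sq' Δ
    have hidr : Real.cosh r ^ 2 = 1 + Real.sinh r ^ 2 := Real.cosh_sq' r
    have h2Δ : Real.cosh (2 * Δ) = 2 * Real.cosh Δ ^ 2 - 1 := by
      rw [Real.cosh_two_mul]; linarith [Real.cosh_sq' Δ]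
    have hcs : 0 < Real.cosh s := Real.cosh_pos s
    rw [h2Δ, hpyth]
    set c := Real.cosh Δ with hc
    set x := Real.cosh r with hx
    have hxpos : 0 < x := Real.cosh_pos r
    have hb : (0:ℝ) < 2 * c ^ 2 - 1 := by nlinarith
    have hsq : (x * c) ^ 2 < (2 * c ^ 2 - 1) ^ 2 := by nlinarith [sq_nonneg (c ^ 2 - 1)]
    exact lt_of_pow_lt_pow_left₀ 2 hb.le hsq
  have := Real.cosh_lt_cosh.mp hcosh_s
  rwa [abs_of_nonneg hs, abs_of_pos (by linarith : (0:ℝ) < 2 * Δ)] at this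
end

section
/- The function Δ ↦ arcosh(√(1 + (1/3)·sinh(Δ)²)·cosh(Δ))/Δ tends to 2 as Δ → ∞. -/
open Real Filter Topology

theorem tendsto_div_atTop_of_abs_sub_mul_le {f : ℝ → ℝ} {c C : ℝ}
    (h : ∀ᶠ x in atTop, |f x - c * x| ≤ C) :
    Tendsto (fun x => f x / x) atTop (𝓝 c) := by
  have hdev : Tendsto (fun x => (f x - c * x) / x) atTop (𝓝 0) := by
    refine squeeze_zero_norm' (a := fun x => C / x) ?_
      (tendsto_const_nhds.div_atTop tendsto_id)
    filter_upwards [h, eventually_gt_atTop 0] with x hx hx0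
    rw [norm_div, Real.norm_of_nonneg hx0.le]
    exact div_le_div_of_nonneg_right hx hx0.le
  refine (add_zero c ▸ hdev.const_add c).congr' ?_
  filter_upwards [eventually_ne_atTop 0] with x hx
  field_simp
  ring

namespace Real

theorem log_le_arcosh' {x : ℝ} (hx : 0 < x) : log x ≤ arcosh' x :=
  log_le_log hx (le_add_of_nonneg_right (sqrt_nonneg _))

theorem arcosh'_le_log_two_add_log {x : ℝ} (hx : 0 < x) : arcosh' x ≤ log 2 + log x := by
  have hsqrt : sqrt (x ^ 2 - 1) ≤ x :=
    sqrt_le_iff.2 ⟨hx.le, by linarith⟩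
  rw [← log_mul two_ne_zero hx.ne']
  exact log_le_log (by positivity) (by linarith)

theorem exp_div_two_le_cosh (x : ℝ) : exp x / 2 ≤ cosh x := by
  rw [cosh_eq]
  linarith [exp_pos (-x)]

theorem cosh_le_exp {x : ℝ} (hx : 0 ≤ x) : cosh x ≤ exp x := by
  rw [← cosh_add_sinh x]
  linarith [sinh_nonneg_iff.2 hx]

theorem sub_log_two_le_log_cosh (x : ℝ) : x - log 2 ≤ log (cosh x) := by
  have := log_le_log (by positivity) (exp_div_two_le_cosh x)
  rwa [log_div (exp_pos x).ne' two_ne_zero, log_exp] at this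

theorem log_cosh_le {x : ℝ} (hx : 0 ≤ x) : log (cosh x) ≤ x := by
  simpa using log_le_log (cosh_pos x) (cosh_le_exp hx)

end Real

theorem cosh_sq_div_two_le_sqrt_mul_cosh (Δ : ℝ) :
    cosh Δ ^ 2 / 2 ≤ sqrt (1 + (1 / 3) * sinh Δ ^ 2) * cosh Δ := by
  have : cosh Δ / 2 ≤ sqrt (1 + (1 / 3) * sinh Δ ^ 2) := by
    refine le_sqrt_of_sq_le ?_
    nlinarith [cosh_sq' Δ, sq_nonneg (sinh Δ)]
  nlinarith [cosh_pos Δ]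

theorem sqrt_mul_cosh_le_cosh_sq (Δ : ℝ) :
    sqrt (1 + (1 / 3) * sinh Δ ^ 2) * cosh Δ ≤ cosh Δ ^ 2 := by
  have : sqrt (1 + (1 / 3) * sinh Δ ^ 2) ≤ cosh Δ :=
    sqrt_le_iff.2 ⟨(cosh_pos Δ).le, by nlinarith [cosh_sq' Δ, sq_nonneg (sinh Δ)]⟩
  nlinarith [cosh_pos Δ]

theorem abs_arcosh'_sqrt_mul_cosh_sub_two_mul_le {Δ : ℝ} (hΔ : 0 ≤ Δ) :
    |arcosh' (sqrt (1 + (1 / 3) * sinh Δ ^ 2) * cosh Δ) - 2 * Δ| ≤ 3 * log 2 := by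
  set g := sqrt (1 + (1 / 3) * sinh Δ ^ 2) * cosh Δ
  have hg : 0 < g := (by positivity : (0:ℝ) < cosh Δ ^ 2 / 2).trans_le
    (cosh_sq_div_two_le_sqrt_mul_cosh Δ)
  have hlog_lo : 2 * log (cosh Δ) - log 2 ≤ log g := by
    have := log_le_log (by positivity) (cosh_sq_div_two_le_sqrt_mul_cosh Δ)
    rwa [log_div (by positivity) two_ne_zero, log_pow, Nat.cast_ofNat] at this
  have hlog_hi : log g ≤ 2 * log (cosh Δ) := by
    have := log_le_log hg (sqrt_mul_cosh_le_cosh_sq Δ)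
    rwa [log_pow, Nat.cast_ofNat] at this
  rw [abs_sub_le_iff]
  constructor
  · linarith [arcosh'_le_log_two_add_log hg, log_cosh_le hΔ]
  · linarith [log_le_arcosh' hg, sub_log_two_le_log_cosh Δ]

theorem stmt_8 :
    Filter.Tendsto
      (fun Δ : ℝ =>
        Real.arcosh' (Real.sqrt (1 + (1 / 3) * Real.sinh Δ ^ 2) * Real.cosh Δ) / Δ)
      Filter.atTop (nhds 2) :=
  tendsto_div_atTop_of_abs_sub_mul_le <|
    (eventually_ge_atTop 0).mono fun _ hΔ => abs_arcosh'_sqrt_mul_cosh_sub_two_mul_le hΔ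
end
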